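/- The polynomial x⁴ - 4x² + 1 has four distinct real roots, namely √(2+√3), -√(2+√3), √(2-√3), and -√(2-√3), and these four roots pairwise have common tails. -/
import Mathlib


/-- The sequence of complete quotients of the continued fraction expansion of `x`:
`cfTerm x 0 = x` and `cfTerm x (n+1) = 1 / (cfTerm x n - ⌊cfTerm x n⌋)`. -/
noncomputable def cfTerm (x : ℝ) : ℕ → ℝ
  | 0 => x
  | n + 1 => (cfTerm x n - ⌊cfTerm x n⌋)⁻¹

/-- The `n`-th partial quotient (digit) of the simple continued fraction expansion
`[x₀; x₁, x₂, …]` of `x`. -/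
noncomputable def cfDigit (x : ℝ) (n : ℕ) : ℤ := ⌊cfTerm x n⌋

/-- Two real numbers have *common tails* if their continued fraction expansions
eventually agree: there exist `m n` with `s_{m+k} = t_{n+k}` for all `k ≥ 0`. -/
def CommonTails (s t : ℝ) : Prop :=
  ∃ m n : ℕ, ∀ k : ℕ, cfDigit s (m + k) = cfDigit t (n + k)

lemma cfTerm_add (x : ℝ) (m k : ℕ) : cfTerm x (m + k) = cfTerm (cfTerm x m) k := by
  induction k with
  | zero => rfl
  | succ n ih =>
      have h : m + (n + 1) = (m + n) + 1 := by ring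
      rw [h]
      show (cfTerm x (m + n) - ⌊cfTerm x (m + n)⌋)⁻¹ = _
      rw [ih]
      rfl

lemma tails_of_eq (s t : ℝ) (m n : ℕ) (h : cfTerm s m = cfTerm t n) : CommonTails s t := by
  refine ⟨m, n, fun k => ?_⟩
  unfold cfDigit
  rw [cfTerm_add, cfTerm_add, h]

lemma cfTerm_one_add_one (y : ℝ) : cfTerm (y + 1) 1 = cfTerm y 1 := by
  show (y + 1 - ⌊y + 1⌋)⁻¹ = (y - ⌊y⌋)⁻¹
  have h : (y + 1 : ℝ) = y + ((1 : ℤ) : ℝ) := by norm_num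
  rw [h, Int.floor_add_intCast]
  push_cast
  ring_nf

set_option maxHeartbeats 1000000 in
/-- The polynomial `x⁴ - 4x² + 1` has four distinct real roots `±√(2+√3)`, `±√(2-√3)`,
and these four roots pairwise have common tails. -/
theorem roots_common_tails_stmt_17 (r₁ r₂ r₃ r₄ : ℝ)
    (h₁ : r₁ = Real.sqrt (2 + Real.sqrt 3)) (h₂ : r₂ = -Real.sqrt (2 + Real.sqrt 3))
    (h₃ : r₃ = Real.sqrt (2 - Real.sqrt 3)) (h₄ : r₄ = -Real.sqrt (2 - Real.sqrt 3)) :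
    (r₁ ≠ r₂ ∧ r₁ ≠ r₃ ∧ r₁ ≠ r₄ ∧ r₂ ≠ r₃ ∧ r₂ ≠ r₄ ∧ r₃ ≠ r₄) ∧
    (r₁ ^ 4 - 4 * r₁ ^ 2 + 1 = 0 ∧ r₂ ^ 4 - 4 * r₂ ^ 2 + 1 = 0 ∧
      r₃ ^ 4 - 4 * r₃ ^ 2 + 1 = 0 ∧ r₄ ^ 4 - 4 * r₄ ^ 2 + 1 = 0) ∧
    (CommonTails r₁ r₂ ∧ CommonTails r₁ r₃ ∧ CommonTails r₁ r₄ ∧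
      CommonTails r₂ r₃ ∧ CommonTails r₂ r₄ ∧ CommonTails r₃ r₄) := by
  set s := Real.sqrt 3 with hs
  have hs0 : (0:ℝ) ≤ s := Real.sqrt_nonneg 3
  have hs2 : s ^ 2 = 3 := Real.sq_sqrt (by norm_num)
  have hs1 : 1 < s := by nlinarith
  have hslt : s < 2 := by nlinarith
  set α := Real.sqrt (2 + s) with hα
  set β := Real.sqrt (2 - s) with hβ
  have hα0 : (0:ℝ) ≤ α := Real.sqrt_nonneg _
  have hβ0 : (0:ℝ) ≤ β := Real.sqrt_nonneg _
  have hα2 : α ^ 2 = 2 + s := Real.sq_sqrt (by linarith)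
  have hβ2 : β ^ 2 = 2 - s := Real.sq_sqrt (by linarith)
  have hαβ : α * β = 1 := by
    nlinarith [sq_nonneg (α * β - 1), sq_nonneg (α * β + 1), mul_nonneg hα0 hβ0]
  have hαlb : 3/2 < α := by nlinarith
  have hαub : α < 2 := by nlinarith
  have hβlb : 0 < β := by nlinarith
  have hβub : β < 1 := by nlinarith
  -- floors
  have fr1 : ⌊r₁⌋ = 1 := by
    rw [h₁, Int.floor_eq_iff (z := 1)]
    push_cast; constructor <;> linarith
  have fr2 : ⌊r₂⌋ = -2 := by
    rw [h₂, Int.floor_eq_iff (z := -2)]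
    push_cast; constructor <;> linarith
  have fr3 : ⌊r₃⌋ = 0 := by
    rw [h₃, Int.floor_eq_iff (z := 0)]
    push_cast; constructor <;> linarith
  have fr4 : ⌊r₄⌋ = -1 := by
    rw [h₄, Int.floor_eq_iff (z := -1)]
    push_cast; constructor <;> linarith
  -- first complete quotients
  have hα1 : α - 1 ≠ 0 := by linarith
  have t11 : cfTerm r₁ 1 = (α - 1)⁻¹ := by
    show (cfTerm r₁ 0 - ⌊cfTerm r₁ 0⌋)⁻¹ = _
    show (r₁ - (⌊r₁⌋ : ℝ))⁻¹ = _
    rw [fr1, h₁]; norm_num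
  have t11lb : 1 ≤ (α - 1)⁻¹ := by
    rw [le_inv_comm₀] <;> linarith
  have t11ub : (α - 1)⁻¹ < 2 := by
    rw [inv_lt_iff_one_lt_mul₀ (by linarith)]; linarith
  have ft11 : ⌊cfTerm r₁ 1⌋ = 1 := by
    rw [t11, Int.floor_eq_iff (z := 1)]; push_cast; constructor <;> linarith
  have t12 : cfTerm r₁ 2 = ((α - 1)⁻¹ - 1)⁻¹ := by
    show (cfTerm r₁ 1 - ⌊cfTerm r₁ 1⌋)⁻¹ = _
    rw [ft11, t11]; norm_num
  have t21 : cfTerm r₂ 1 = (2 - α)⁻¹ := by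
    show (r₂ - (⌊r₂⌋ : ℝ))⁻¹ = _
    rw [fr2, h₂]
    push_cast; ring_nf
  have t31 : cfTerm r₃ 1 = α := by
    show (r₃ - (⌊r₃⌋ : ℝ))⁻¹ = _
    rw [fr3, h₃]
    push_cast
    rw [sub_zero]
    have hb : β ≠ 0 := ne_of_gt hβlb
    field_simp
    linarith [hαβ]
  have t41 : cfTerm r₄ 1 = (1 - β)⁻¹ := by
    show (r₄ - (⌊r₄⌋ : ℝ))⁻¹ = _
    rw [fr4, h₄]
    push_cast; ring_nf
  -- key algebraic identities
  have hβ1 : 1 - β ≠ 0 := by linarith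
  have h2α : 2 - α ≠ 0 := by linarith
  have e2 : (1 - β)⁻¹ = (α - 1)⁻¹ + 1 := by
    have hb1 : (1 - β) = (α - 1) * β := by linear_combination -1 * hαβ
    have h : ((α - 1)⁻¹ + 1) * (1 - β) = 1 := by
      rw [hb1, add_mul, one_mul, ← mul_assoc, inv_mul_cancel₀ hα1, one_mul]
      linear_combination hαβ
    exact inv_eq_of_mul_eq_one_left h
  have e3 : (2 - α)⁻¹ = ((α - 1)⁻¹ - 1)⁻¹ + 1 := by
    have hu : (α - 1)⁻¹ - 1 = (2 - α) / (α - 1) := by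
      field_simp
      ring
    rw [hu, inv_div]
    field_simp
    ring
  -- merged complete quotients
  have k13 : cfTerm r₁ 0 = cfTerm r₃ 1 := by rw [t31]; exact h₁
  have k14 : cfTerm r₁ 2 = cfTerm r₄ 2 := by
    have : cfTerm r₄ 2 = cfTerm (cfTerm r₄ 1) 1 := by
      rw [← cfTerm_add r₄ 1 1]
    rw [this, t41, e2, cfTerm_one_add_one, ← t11, ← cfTerm_add r₁ 1 1]
  have k12 : cfTerm r₁ 3 = cfTerm r₂ 2 := by
    have : cfTerm r₂ 2 = cfTerm (cfTerm r₂ 1) 1 := by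
      rw [← cfTerm_add r₂ 1 1]
    rw [this, t21, e3, ← t12, cfTerm_one_add_one, ← cfTerm_add r₁ 2 1]
  have k34 : cfTerm r₃ 3 = cfTerm r₄ 2 := by
    rw [← k14, show (3:ℕ) = 1 + 2 from rfl, cfTerm_add, ← k13]
    rw [show cfTerm r₁ 0 = r₁ from rfl]
  have k23 : cfTerm r₂ 2 = cfTerm r₃ 4 := by
    rw [← k12, show (4:ℕ) = 1 + 3 from rfl, cfTerm_add, ← k13]
    rw [show cfTerm r₁ 0 = r₁ from rfl]
  have k24 : cfTerm r₂ 2 = cfTerm r₄ 3 := by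
    rw [← k12, show (3:ℕ) = 2 + 1 from rfl, cfTerm_add r₄, ← k14, ← cfTerm_add r₁ 2 1]
  refine ⟨⟨?_, ?_, ?_, ?_, ?_, ?_⟩, ⟨?_, ?_, ?_, ?_⟩, ?_, ?_, ?_, ?_, ?_, ?_⟩
  · rw [h₁, h₂]; intro h; linarith
  · rw [h₁, h₃]; intro h; linarith
  · rw [h₁, h₄]; intro h; linarith
  · rw [h₂, h₃]; intro h; linarith
  · rw [h₂, h₄]; intro h; linarith
  · rw [h₃, h₄]; intro h; linarith
  · rw [h₁]
    have h4 : α ^ 4 = (2 + s) ^ 2 := by rw [← hα2]; ring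
    nlinarith [hs2]
  · rw [h₂]
    have h4 : α ^ 4 = (2 + s) ^ 2 := by rw [← hα2]; ring
    nlinarith [hs2]
  · rw [h₃]
    have h4 : β ^ 4 = (2 - s) ^ 2 := by rw [← hβ2]; ring
    nlinarith [hs2]
  · rw [h₄]
    have h4 : β ^ 4 = (2 - s) ^ 2 := by rw [← hβ2]; ring
    nlinarith [hs2]
  · exact tails_of_eq _ _ 3 2 k12
  · exact tails_of_eq _ _ 0 1 k13
  · exact tails_of_eq _ _ 2 2 k14
  · exact tails_of_eq _ _ 2 4 k23
  · exact tails_of_eq _ _ 2 3 k24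
  · exact tails_of_eq _ _ 3 2 k34
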